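/- arXiv:2605.26054 — 7 statements merged into one kernel-verified Lean document; each statement's English description precedes it below -/
import Mathlib

section
/- Let T>0, let α:[0,T]→(0,1) be Lipschitz continuous with Lipschitz constant L, let τ>0 satisfy Lτ<2, and let t_m∈[0,T] with t_m+τ≤T. Then there exists a unique σ∈(1/2,1) such that σ = 1 − (1/2)·α(t_m+στ); equivalently, the function F(σ) := σ − (1 − (1/2)·α(t_m+στ)) has exactly one zero in the open interval (1/2,1). -/
/-- existence and uniqueness of the intermediate parameter σ ∈ (1/2,1)
solving the fixed-point equation σ = 1 − (1/2)·α(t_m + σ·τ). -/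
theorem stmt_0 (T L τ tm : ℝ) (α : ℝ → ℝ)
    (hT : 0 < T) (hL : 0 ≤ L)
    (hrange : ∀ t ∈ Set.Icc (0 : ℝ) T, α t ∈ Set.Ioo (0 : ℝ) 1)
    (hLip : ∀ s ∈ Set.Icc (0 : ℝ) T, ∀ t ∈ Set.Icc (0 : ℝ) T,
      |α s - α t| ≤ L * |s - t|)
    (hτ : 0 < τ) (hLτ : L * τ < 2)
    (htm : tm ∈ Set.Icc (0 : ℝ) T) (htmτ : tm + τ ≤ T) :
    ∃! σ : ℝ, σ ∈ Set.Ioo (1/2 : ℝ) 1 ∧ σ = 1 - α (tm + σ * τ) / 2 := by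
  obtain ⟨htm0, htmT⟩ := htm
  -- the map σ ↦ tm + σ τ sends [1/2,1] into [0,T]
  have hmaps : ∀ σ : ℝ, σ ∈ Set.Icc (1/2 : ℝ) 1 → tm + σ * τ ∈ Set.Icc (0 : ℝ) T := by
    intro σ ⟨h1, h2⟩
    constructor
    · nlinarith
    · nlinarith
  -- continuity of α on [0,T]
  have hαcont : ContinuousOn α (Set.Icc (0 : ℝ) T) := by
    apply LipschitzOnWith.continuousOn (K := Real.toNNReal L)
    rw [lipschitzOnWith_iff_dist_le_mul]
    intro x hx y hy
    simpa [Real.dist_eq, Real.coe_toNNReal L hL] using hLip x hx y hy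
  -- the function g σ = σ - (1 - α(tm+στ)/2)
  set g : ℝ → ℝ := fun σ => σ - (1 - α (tm + σ * τ) / 2) with hg
  have hgcont : ContinuousOn g (Set.Icc (1/2 : ℝ) 1) := by
    apply ContinuousOn.sub continuousOn_id
    apply ContinuousOn.sub continuousOn_const
    apply ContinuousOn.div_const
    exact hαcont.comp (by fun_prop) hmaps
  have ha : g (1/2) < 0 := by
    have := hrange (tm + (1/2) * τ) (hmaps _ ⟨le_refl _, by norm_num⟩)
    simp only [hg]
    obtain ⟨h1, h2⟩ := this
    linarith
  have hb : 0 < g 1 := by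
    have := hrange (tm + 1 * τ) (hmaps _ ⟨by norm_num, le_refl _⟩)
    simp only [hg]
    obtain ⟨h1, h2⟩ := this
    linarith
  have hsub := intermediate_value_Ioo (by norm_num : (1/2 : ℝ) ≤ 1) hgcont
  have h0 : (0 : ℝ) ∈ Set.Ioo (g (1/2)) (g 1) := ⟨ha, hb⟩
  obtain ⟨σ, hσmem, hσeq⟩ := hsub h0
  refine ⟨σ, ⟨hσmem, by simp only [hg] at hσeq; linarith⟩, ?_⟩
  rintro σ' ⟨hσ'mem, hσ'eq⟩
  -- uniqueness via contraction
  have hfix : σ = 1 - α (tm + σ * τ) / 2 := by simp only [hg] at hσeq; linarith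
  have hx := hmaps σ' (Set.mem_Icc_of_Ioo hσ'mem)
  have hy := hmaps σ (Set.mem_Icc_of_Ioo hσmem)
  have hd := hLip _ hx _ hy
  have key : |σ' - σ| ≤ L * τ / 2 * |σ' - σ| := by
    have h1 : σ' - σ = (α (tm + σ * τ) - α (tm + σ' * τ)) / 2 := by
      linarith [hσ'eq, hfix]
    have h2 : |σ' - σ| = |α (tm + σ' * τ) - α (tm + σ * τ)| / 2 := by
      rw [h1, abs_div, abs_sub_comm]
      norm_num
    have h3 : |tm + σ' * τ - (tm + σ * τ)| = τ * |σ' - σ| := by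
      rw [show tm + σ' * τ - (tm + σ * τ) = τ * (σ' - σ) by ring, abs_mul,
        abs_of_pos hτ]
    rw [h2]
    rw [h3] at hd
    nlinarith [abs_nonneg (σ' - σ)]
  by_contra hne
  have habs : 0 < |σ' - σ| := abs_pos.mpr (sub_ne_zero.mpr hne)
  nlinarith [habs, key]
end

section
/- Let T>0, let α:[0,T]→(0,1) be Lipschitz continuous with Lipschitz constant L, and let τ>0 satisfy Lτ<2. For an integer m≥1 with t_m+τ≤T, let σ_m∈(1/2,1) and σ_{m−1}∈(1/2,1) be the unique roots of σ = 1 − (1/2)·α(t_m+στ) and σ = 1 − (1/2)·α(t_{m−1}+στ), respectively. Then |σ_m − σ_{m−1}| ≤ Lτ/(2−Lτ). -/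
/-- Lipschitz-in-time estimate for the intermediate parameters:
|σ_m − σ_{m−1}| ≤ Lτ/(2 − Lτ). -/
theorem stmt_1 (T L τ : ℝ) (m : ℕ) (α : ℝ → ℝ) (σm σm' : ℝ)
    (hT : 0 < T) (hL : 0 ≤ L)
    (hrange : ∀ t ∈ Set.Icc (0 : ℝ) T, α t ∈ Set.Ioo (0 : ℝ) 1)
    (hLip : ∀ s ∈ Set.Icc (0 : ℝ) T, ∀ t ∈ Set.Icc (0 : ℝ) T,
      |α s - α t| ≤ L * |s - t|)
    (hτ : 0 < τ) (hLτ : L * τ < 2)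
    (hm : 1 ≤ m) (hmT : (m : ℝ) * τ + τ ≤ T)
    (hσm_mem : σm ∈ Set.Ioo (1/2 : ℝ) 1)
    (hσm_root : σm = 1 - α ((m : ℝ) * τ + σm * τ) / 2)
    (hσm'_mem : σm' ∈ Set.Ioo (1/2 : ℝ) 1)
    (hσm'_root : σm' = 1 - α (((m : ℝ) - 1) * τ + σm' * τ) / 2) :
    |σm - σm'| ≤ L * τ / (2 - L * τ) := by
  obtain ⟨h1, h2⟩ := hσm_mem
  obtain ⟨h1', h2'⟩ := hσm'_mem
  have hm1 : (1 : ℝ) ≤ (m : ℝ) := by exact_mod_cast hm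
  set t : ℝ := (m : ℝ) * τ + σm * τ with ht
  set t' : ℝ := ((m : ℝ) - 1) * τ + σm' * τ with ht'
  have htmem : t ∈ Set.Icc (0 : ℝ) T := by
    constructor
    · nlinarith
    · nlinarith
  have ht'mem : t' ∈ Set.Icc (0 : ℝ) T := by
    constructor
    · nlinarith
    · nlinarith
  have hlip := hLip t htmem t' ht'mem
  have hdiff : σm - σm' = (α t' - α t) / 2 := by
    rw [hσm_root, hσm'_root]; ring
  have habs : |σm - σm'| = |α t' - α t| / 2 := by
    rw [hdiff, abs_div]; norm_num
  have htt' : t - t' = τ * (1 + σm - σm') := by ring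
  have hpos : 0 ≤ 1 + σm - σm' := by linarith
  have habs2 : |t - t'| = τ * (1 + σm - σm') := by
    rw [htt']; exact abs_of_nonneg (by nlinarith)
  have hkey : |σm - σm'| ≤ L * (τ * (1 + σm - σm')) / 2 := by
    rw [habs, ← habs2, abs_sub_comm (α t')]
    linarith
  have hb : σm - σm' ≤ |σm - σm'| := le_abs_self _
  have hb2 : σm' - σm ≤ |σm - σm'| := by rw [abs_sub_comm]; exact le_abs_self _
  have hd : (0:ℝ) ≤ |σm - σm'| := abs_nonneg _
  rw [le_div_iff₀ (by linarith)]
  nlinarith [mul_nonneg (mul_nonneg hL hτ.le) hd]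
end

section
/- Let T>0, let α:[0,T]→(0,1) be Lipschitz continuous with Lipschitz constant L, and let τ>0 satisfy Lτ<2. For an integer m≥1 with t_m+τ≤T, let σ_m∈(1/2,1) and σ_{m−1}∈(1/2,1) be the unique roots of σ = 1 − (1/2)·α(t_m+στ) and σ = 1 − (1/2)·α(t_{m−1}+στ), respectively. Then α(t_m+σ_mτ) − α(t_{m−1}+σ_{m−1}τ) = 2(σ_{m−1} − σ_m), and consequently |α(t_m+σ_mτ) − α(t_{m−1}+σ_{m−1}τ)| ≤ 2Lτ/(2−Lτ). -/
/-- α(t_m+σ_mτ) − α(t_{m−1}+σ_{m−1}τ) = 2(σ_{m−1} − σ_m) and the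
resulting Lipschitz estimate |α(t_m+σ_mτ) − α(t_{m−1}+σ_{m−1}τ)| ≤ 2Lτ/(2−Lτ). -/
theorem stmt_2 (T L τ : ℝ) (m : ℕ) (α : ℝ → ℝ) (σm σm' : ℝ)
    (hT : 0 < T) (hL : 0 ≤ L)
    (hrange : ∀ t ∈ Set.Icc (0 : ℝ) T, α t ∈ Set.Ioo (0 : ℝ) 1)
    (hLip : ∀ s ∈ Set.Icc (0 : ℝ) T, ∀ t ∈ Set.Icc (0 : ℝ) T,
      |α s - α t| ≤ L * |s - t|)
    (hτ : 0 < τ) (hLτ : L * τ < 2)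
    (hm : 1 ≤ m) (hmT : (m : ℝ) * τ + τ ≤ T)
    (hσm_mem : σm ∈ Set.Ioo (1/2 : ℝ) 1)
    (hσm_root : σm = 1 - α ((m : ℝ) * τ + σm * τ) / 2)
    (hσm'_mem : σm' ∈ Set.Ioo (1/2 : ℝ) 1)
    (hσm'_root : σm' = 1 - α (((m : ℝ) - 1) * τ + σm' * τ) / 2) :
    α ((m : ℝ) * τ + σm * τ) - α (((m : ℝ) - 1) * τ + σm' * τ) = 2 * (σm' - σm) ∧
    |α ((m : ℝ) * τ + σm * τ) - α (((m : ℝ) - 1) * τ + σm' * τ)| ≤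
      2 * L * τ / (2 - L * τ) := by
  obtain ⟨hσm1, hσm2⟩ := hσm_mem
  obtain ⟨hσm'1, hσm'2⟩ := hσm'_mem
  have hm1 : (1 : ℝ) ≤ (m : ℝ) := by exact_mod_cast hm
  set x := (m : ℝ) * τ + σm * τ with hx
  set y := ((m : ℝ) - 1) * τ + σm' * τ with hy
  have hxmem : x ∈ Set.Icc (0 : ℝ) T := by
    constructor
    · nlinarith
    · nlinarith
  have hymem : y ∈ Set.Icc (0 : ℝ) T := by
    constructor
    · nlinarith
    · nlinarith
  have heq : α x - α y = 2 * (σm' - σm) := by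
    have h1 : α x = 2 * (1 - σm) := by linarith [hσm_root]
    have h2 : α y = 2 * (1 - σm') := by linarith [hσm'_root]
    linarith
  refine ⟨heq, ?_⟩
  have hLb := hLip x hxmem y hymem
  have hxy : x - y = τ + (σm - σm') * τ := by ring
  have habs : |x - y| ≤ τ + |σm - σm'| * τ := by
    rw [hxy]
    calc |τ + (σm - σm') * τ| ≤ |τ| + |(σm - σm') * τ| := abs_add_le _ _
    _ = τ + |σm - σm'| * τ := by
        rw [abs_mul, abs_of_pos hτ]
  have hss : |σm - σm'| = |α x - α y| / 2 := by
    rw [heq]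
    rw [abs_mul, abs_of_nonneg (by norm_num : (0:ℝ) ≤ 2), abs_sub_comm]
    ring
  have hkey : |α x - α y| ≤ L * (τ + |α x - α y| / 2 * τ) := by
    calc |α x - α y| ≤ L * |x - y| := hLb
    _ ≤ L * (τ + |σm - σm'| * τ) := by
        exact mul_le_mul_of_nonneg_left habs hL
    _ = L * (τ + |α x - α y| / 2 * τ) := by rw [hss]
  have h2L : 0 < 2 - L * τ := by linarith
  rw [le_div_iff₀ h2L]
  nlinarith [abs_nonneg (α x - α y)]
end

section
/- Let α∈(0,1), set σ := 1 − α/2 (so σ∈(1/2,1)), and let m≥1 be an integer. Define c_0^{(m)} := ((1+σ)^{2−α} − σ^{2−α})/(2−α) − ((1+σ)^{1−α} − σ^{1−α})/2; for 1≤i≤m−1, c_i^{(m)} := ((i+σ+1)^{2−α} − 2(i+σ)^{2−α} + (i+σ−1)^{2−α})/(2−α) − ((i+σ+1)^{1−α} − 2(i+σ)^{1−α} + (i+σ−1)^{1−α})/2; and c_m^{(m)} := (3(m+σ)^{1−α} − (m+σ−1)^{1−α})/2 − ((m+σ)^{2−α} − (m+σ−1)^{2−α})/(2−α). Then 0 <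 (1−α)/(2(m+σ)^{α}) < c_m^{(m)} < c_{m−1}^{(m)} < ⋯ < c_1^{(m)} < c_0^{(m)}. -/
/-- The discrete convolution weights `c_i^{(m)}` of the second-order (L2-1σ type)
approximation of the Caputo derivative of order `β` at the intermediate point
with parameter `σ`. -/
noncomputable def cweight (β σ : ℝ) (m i : ℕ) : ℝ :=
  if i = 0 then
    ((1 + σ) ^ (2 - β) - σ ^ (2 - β)) / (2 - β)
      - ((1 + σ) ^ (1 - β) - σ ^ (1 - β)) / 2
  else if i = m then
    (3 * ((m : ℝ) + σ) ^ (1 - β) - ((m : ℝ) + σ - 1) ^ (1 - β)) / 2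
      - (((m : ℝ) + σ) ^ (2 - β) - ((m : ℝ) + σ - 1) ^ (2 - β)) / (2 - β)
  else
    (((i : ℝ) + σ + 1) ^ (2 - β) - 2 * ((i : ℝ) + σ) ^ (2 - β)
        + ((i : ℝ) + σ - 1) ^ (2 - β)) / (2 - β)
      - (((i : ℝ) + σ + 1) ^ (1 - β) - 2 * ((i : ℝ) + σ) ^ (1 - β)
        + ((i : ℝ) + σ - 1) ^ (1 - β)) / 2

/-!
Write `G x = x^(2-α)/(2-α) - x^(1-α)/2` and `g = G'`. The inner weights are second differences
`c_i = G(x+1) - 2 G(x) + G(x-1)` at `x = i + σ`, and they decrease in `x` because `g` is strictly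
concave. The last weight falls short of this second-difference formula by the error of the
trapezoid rule for the concave function `x^(1-α)`. For `c_0`, the midpoint rule bounds
`G(σ+2) - G(σ+1)` from above and the trapezoid rule bounds `G(σ+1) - G(σ)` from below; the choice
`σ = 1 - α/2` makes `g(σ+t) = (t + 1/2) (σ+t)^(-α)`, so the two bounds compare. The lower bound
for `c_m` compares secant slopes of `x^(2-α)` and `x^(1-α)` on `[m+σ-1, m+σ]` with their
derivatives at `m+σ`.
-/

open Set

section Concave

variable {s : Set ℝ} {F f : ℝ → ℝ} {a b x h : ℝ}

theorem StrictConcaveOn.chord_lt (hf : StrictConcaveOn ℝ s f) (ha : a ∈ s) (hb : b ∈ s)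
    (hax : a < x) (hxb : x < b) : (b - x) * f a + (x - a) * f b < (b - a) * f x := by
  have h := hf.slope_anti_adjacent ha hb hax hxb
  rw [div_lt_div_iff₀ (by linarith) (by linarith)] at h
  linear_combination h

theorem StrictConcaveOn.add_lt_two_mul (hf : StrictConcaveOn ℝ s f) (h₁ : x - h ∈ s)
    (h₂ : x + h ∈ s) (hh : 0 < h) : f (x - h) + f (x + h) < 2 * f x := by
  have := hf.chord_lt h₁ h₂ (by linarith : x - h < x) (by linarith : x < x + h)
  nlinarith

theorem StrictAntiOn.strictConcaveOn_of_hasDerivAt {f' : ℝ → ℝ} (hf' : StrictAntiOn f' s)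
    (hs : Convex ℝ s) (hso : IsOpen s) (hf : ∀ x ∈ s, HasDerivAt f (f' x) x) :
    StrictConcaveOn ℝ s f := by
  refine StrictAntiOn.strictConcaveOn_of_deriv hs
    (fun x hx => (hf x hx).continuousAt.continuousWithinAt) ?_
  rw [hso.interior_eq]
  intro x hx y hy hxy
  rw [(hf x hx).deriv, (hf y hy).deriv]
  exact hf' hx hy hxy

theorem trapezoid_lt_sub_of_strictConcaveOn (hab : a < b)
    (hF : ∀ x ∈ Icc a b, HasDerivAt F (f x) x) (hf : StrictConcaveOn ℝ (Icc a b) f) :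
    (b - a) * (f a + f b) / 2 < F b - F a := by
  have hba : b - a ≠ 0 := by linarith
  set K : ℝ → ℝ := fun t => F t - (t - a) * f a - (t - a) ^ 2 / (2 * (b - a)) * (f b - f a)
  have hK : ∀ t ∈ Icc a b, HasDerivAt K (f t - f a - (t - a) / (b - a) * (f b - f a)) t := by
    intro t ht
    have := ((hF t ht).sub (((hasDerivAt_id t).sub_const a).mul_const (f a))).sub
      (((((hasDerivAt_id t).sub_const a).pow 2).div_const (2 * (b - a))).mul_const (f b - f a))
    refine this.congr_deriv ?_
    simp only [id_eq, Nat.cast_ofNat]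
    field_simp
    ring
  have hK_mono : StrictMonoOn K (Icc a b) := by
    refine strictMonoOn_of_hasDerivWithinAt_pos (convex_Icc a b)
      (fun t ht => (hK t ht).continuousAt.continuousWithinAt)
      (fun t ht => (hK t (interior_subset ht)).hasDerivWithinAt) ?_
    rw [interior_Icc]
    rintro t ⟨hat, htb⟩
    have := hf.chord_lt (left_mem_Icc.2 hab.le) (right_mem_Icc.2 hab.le) hat htb
    have hrepr : f t - f a - (t - a) / (b - a) * (f b - f a)
        = ((b - a) * f t - ((b - t) * f a + (t - a) * f b)) / (b - a) := by
      field_simp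
      ring
    rw [hrepr]
    exact div_pos (by linarith) (by linarith)
  have := hK_mono (left_mem_Icc.2 hab.le) (right_mem_Icc.2 hab.le) hab
  simp only [K, sub_self, zero_mul, sub_zero, zero_pow two_ne_zero, zero_div] at this
  have hsq : (b - a) ^ 2 / (2 * (b - a)) = (b - a) / 2 := by field_simp
  rw [hsq] at this
  linarith

theorem sub_lt_midpoint_of_strictConcaveOn (hab : a < b)
    (hF : ∀ x ∈ Icc a b, HasDerivAt F (f x) x) (hf : StrictConcaveOn ℝ (Icc a b) f) :
    F b - F a < (b - a) * f ((a + b) / 2) := by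
  set c := (a + b) / 2 with hc
  set r := (b - a) / 2 with hr
  have hmem : ∀ t ∈ Icc 0 r, c - t ∈ Icc a b ∧ c + t ∈ Icc a b := fun t ⟨ht₀, htr⟩ =>
    ⟨⟨by linarith, by linarith⟩, ⟨by linarith, by linarith⟩⟩
  set K : ℝ → ℝ := fun t => F (c + t) - F (c - t) - 2 * t * f c
  have hK : ∀ t ∈ Icc 0 r, HasDerivAt K (f (c + t) + f (c - t) - 2 * f c) t := by
    intro t ht
    have hright := (hF _ (hmem t ht).2).comp_const_add c t
    have hleft := (hF _ (hmem t ht).1).comp_const_sub c t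
    refine ((hright.sub hleft).sub (((hasDerivAt_id t).const_mul 2).mul_const (f c))).congr_deriv ?_
    ring
  have hK_anti : StrictAntiOn K (Icc 0 r) := by
    refine strictAntiOn_of_hasDerivWithinAt_neg (convex_Icc 0 r)
      (fun t ht => (hK t ht).continuousAt.continuousWithinAt)
      (fun t ht => (hK t (interior_subset ht)).hasDerivWithinAt) ?_
    rw [interior_Icc]
    intro t ht
    have hmem' := hmem t (Ioo_subset_Icc_self ht)
    have := hf.add_lt_two_mul hmem'.1 hmem'.2 ht.1
    linarith
  have hr₀ : 0 < r := by linarith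
  have := hK_anti (left_mem_Icc.2 hr₀.le) (right_mem_Icc.2 hr₀.le) hr₀
  simp only [K, show c + r = b by linarith, show c - r = a by linarith, add_zero, sub_zero,
    mul_zero, zero_mul, sub_self] at this
  linarith [show 2 * r * f c = (b - a) * f c by rw [hr]; ring]

theorem strictAntiOn_second_difference (hh : 0 < h) {c : ℝ}
    (hF : ∀ x ∈ Ioi c, HasDerivAt F (f x) x) (hf : StrictConcaveOn ℝ (Ioi c) f) :
    StrictAntiOn (fun x => F (x + h) - 2 * F x + F (x - h)) (Ioi (c + h)) := by
  have hmem : ∀ x, c + h < x → c < x - h ∧ c < x ∧ c < x + h :=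
    fun x hx => ⟨by linarith, by linarith, by linarith⟩
  have hd : ∀ x ∈ Ioi (c + h), HasDerivAt (fun x => F (x + h) - 2 * F x + F (x - h))
      (f (x + h) - 2 * f x + f (x - h)) x := fun x hx =>
    (((hF _ (hmem x hx).2.2).comp_add_const x h).sub
      ((hF x (hmem x hx).2.1).const_mul 2)).add ((hF _ (hmem x hx).1).comp_sub_const x h)
  refine strictAntiOn_of_hasDerivWithinAt_neg (convex_Ioi _)
    (fun x hx => (hd x hx).continuousAt.continuousWithinAt)
    (fun x hx => (hd x (interior_subset hx)).hasDerivWithinAt) ?_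
  rw [interior_Ioi]
  intro x hx
  have := hf.add_lt_two_mul (hmem x hx).1 (hmem x hx).2.2 hh
  linarith

end Concave

namespace CWeight

variable {α σ x : ℝ} {m i : ℕ}

noncomputable def G (α x : ℝ) : ℝ := x ^ (2 - α) / (2 - α) - x ^ (1 - α) / 2

noncomputable def g (α x : ℝ) : ℝ := x ^ (1 - α) - (1 - α) / 2 * x ^ (-α)

noncomputable def S (α x : ℝ) : ℝ := G α (x + 1) - 2 * G α x + G α (x - 1)

theorem hasDerivAt_rpow_two_sub_div (hα : α < 1) (hx : 0 < x) :
    HasDerivAt (fun y => y ^ (2 - α) / (2 - α)) (x ^ (1 - α)) x := by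
  refine ((Real.hasDerivAt_rpow_const (Or.inl hx.ne')).div_const (2 - α)).congr_deriv ?_
  rw [show 2 - α - 1 = 1 - α by ring]
  field_simp [show 2 - α ≠ 0 by linarith]

theorem hasDerivAt_rpow_one_sub (hx : 0 < x) :
    HasDerivAt (fun y => y ^ (1 - α)) ((1 - α) * x ^ (-α)) x := by
  simpa only [show 1 - α - 1 = -α by ring] using
    Real.hasDerivAt_rpow_const (p := 1 - α) (Or.inl hx.ne')

theorem hasDerivAt_G (hα : α < 1) (hx : 0 < x) : HasDerivAt (G α) (g α x) x := by
  refine ((hasDerivAt_rpow_two_sub_div hα hx).sub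
    ((hasDerivAt_rpow_one_sub hx).div_const 2)).congr_deriv ?_
  rw [g]
  ring

theorem hasDerivAt_g (hx : 0 < x) :
    HasDerivAt (g α) ((1 - α) * x ^ (-α) + α * (1 - α) / 2 * x ^ (-α - 1)) x := by
  refine ((hasDerivAt_rpow_one_sub hx).sub
    ((Real.hasDerivAt_rpow_const (p := -α) (Or.inl hx.ne')).const_mul ((1 - α) / 2))).congr_deriv ?_
  ring

theorem strictConcaveOn_g (hα : α ∈ Ioo 0 1) : StrictConcaveOn ℝ (Ioi 0) (g α) := by
  refine StrictAntiOn.strictConcaveOn_of_hasDerivAt (fun x hx y hy hxy => ?_) (convex_Ioi 0)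
    isOpen_Ioi fun x hx => hasDerivAt_g hx
  have h₁ := Real.rpow_lt_rpow_of_neg hx hxy (by linarith [hα.1] : -α < 0)
  have h₂ := Real.rpow_lt_rpow_of_neg hx hxy (by linarith [hα.1] : -α - 1 < 0)
  have c₁ : 0 < 1 - α := by linarith [hα.2]
  have c₂ : 0 < α * (1 - α) / 2 := div_pos (mul_pos hα.1 c₁) two_pos
  linarith [mul_lt_mul_of_pos_left h₁ c₁, mul_lt_mul_of_pos_left h₂ c₂]

theorem g_eq_mul_rpow_neg (hx : 0 < x) : g α x = (x - (1 - α) / 2) * x ^ (-α) := by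
  rw [g, show 1 - α = 1 + -α by ring, Real.rpow_add hx, Real.rpow_one]
  ring

theorem strictAntiOn_S (hα : α ∈ Ioo 0 1) : StrictAntiOn (S α) (Ioi 1) := by
  have h := strictAntiOn_second_difference one_pos (fun x hx => hasDerivAt_G hα.2 hx)
    (strictConcaveOn_g hα)
  rw [zero_add] at h
  exact h

theorem cweight_zero : cweight α σ m 0 = G α (σ + 1) - G α σ := by
  rw [cweight, if_pos rfl, G, G, add_comm 1 σ]
  ring

theorem cweight_of_ne (h₀ : i ≠ 0) (hm : i ≠ m) : cweight α σ m i = S α (i + σ) := by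
  rw [cweight, if_neg h₀, if_neg hm, S, G, G, G]
  ring_nf

theorem cweight_self (hm : m ≠ 0) :
    cweight α σ m m = (3 * ((m : ℝ) + σ) ^ (1 - α) - ((m : ℝ) + σ - 1) ^ (1 - α)) / 2
      - (((m : ℝ) + σ) ^ (2 - α) - ((m : ℝ) + σ - 1) ^ (2 - α)) / (2 - α) := by
  rw [cweight, if_neg hm, if_pos rfl]

theorem div_rpow_lt_cweight_self (hα : α ∈ Ioo 0 1) (hm : m ≠ 0) (hx : 1 ≤ (m : ℝ) + σ) :
    (1 - α) / (2 * ((m : ℝ) + σ) ^ α) < cweight α σ m m := by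
  rw [cweight_self hm]
  generalize (m : ℝ) + σ = x at hx ⊢
  obtain ⟨hα₀, hα₁⟩ := hα
  have hx₀ : 0 < x := by linarith
  have hmem₁ : x - 1 ∈ Ici (0 : ℝ) := sub_nonneg.2 hx
  have hmem : x ∈ Ici (0 : ℝ) := hx₀.le
  have hconvex := (strictConvexOn_rpow (by linarith : 1 < 2 - α)).slope_lt_of_hasDerivAt
    hmem₁ hmem (sub_one_lt x) (Real.hasDerivAt_rpow_const (p := 2 - α) (Or.inl hx₀.ne'))
  have hconcave := (Real.strictConcaveOn_rpow (by linarith : 0 < 1 - α)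
    (by linarith : 1 - α < 1)).lt_slope_of_hasDerivAt hmem₁ hmem (sub_one_lt x)
    (hasDerivAt_rpow_one_sub hx₀)
  simp only [slope_def_field, sub_sub_cancel, div_one, show 2 - α - 1 = 1 - α by ring]
    at hconvex hconcave
  have hP : (x ^ (2 - α) - (x - 1) ^ (2 - α)) / (2 - α) < x ^ (1 - α) := by
    rw [div_lt_iff₀ (by linarith)]
    linarith
  have hlhs : (1 - α) / (2 * x ^ α) = (1 - α) * x ^ (-α) / 2 := by
    rw [Real.rpow_neg hx₀.le]
    ring
  rw [hlhs]
  linarith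

theorem cweight_self_lt_S (hα : α ∈ Ioo 0 1) (hm : m ≠ 0) (hσ : 0 < σ) :
    cweight α σ m m < S α (m + σ) := by
  have hx : 0 < (m : ℝ) + σ := by positivity
  have htrap := trapezoid_lt_sub_of_strictConcaveOn (lt_add_one ((m : ℝ) + σ))
    (fun y hy => hasDerivAt_rpow_two_sub_div hα.2 (hx.trans_le hy.1))
    ((Real.strictConcaveOn_rpow (by linarith [hα.2]) (by linarith [hα.1])).subset
      (fun y hy => hx.le.trans hy.1) (convex_Icc _ _))
  rw [cweight_self hm, S, G, G, G]
  rw [add_sub_cancel_left, one_mul] at htrap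
  rw [sub_div _ _ (2 - α)]
  linarith

theorem S_lt_cweight_zero (hα : α ∈ Ioo 0 1) (hσ : σ = 1 - α / 2) :
    S α (σ + 1) < cweight α σ m 0 := by
  have hσ₀ : 0 < σ := by linarith [hα.2]
  have hG : ∀ y ∈ Icc σ (σ + 2), HasDerivAt (G α) (g α y) y :=
    fun y hy => hasDerivAt_G hα.2 (hσ₀.trans_le hy.1)
  have hg : ∀ {a b}, σ ≤ a → StrictConcaveOn ℝ (Icc a b) (g α) := fun ha =>
    (strictConcaveOn_g hα).subset (fun y hy => hσ₀.trans_le (ha.trans hy.1)) (convex_Icc _ _)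
  have hmid := sub_lt_midpoint_of_strictConcaveOn (lt_add_one (σ + 1))
    (fun y hy => hG y ⟨by linarith [hy.1], by linarith [hy.2]⟩) (hg (by linarith))
  have htrap := trapezoid_lt_sub_of_strictConcaveOn (lt_add_one σ)
    (fun y hy => hG y ⟨hy.1, by linarith [hy.2]⟩) (hg le_rfl)
  have hg_shift : ∀ t, 0 ≤ t → g α (σ + t) = (t + 1 / 2) * (σ + t) ^ (-α) := fun t ht => by
    rw [g_eq_mul_rpow_neg (by linarith), hσ]
    ring_nf
  have h₀ := hg_shift 0 le_rfl
  have h₁ := hg_shift 1 zero_le_one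
  have h₃ := hg_shift (3 / 2) (by norm_num)
  rw [add_zero] at h₀
  rw [show (σ + 1 + (σ + 1 + 1)) / 2 = σ + 3 / 2 by ring, h₃] at hmid
  rw [h₀, h₁] at htrap
  have hpow₁ := Real.rpow_lt_rpow_of_neg hσ₀ (lt_add_one σ) (by linarith [hα.1] : -α < 0)
  have hpow₂ := Real.rpow_lt_rpow_of_neg (by linarith) (by linarith : σ + 1 < σ + 3 / 2)
    (by linarith [hα.1] : -α < 0)
  rw [cweight_zero, S, add_sub_cancel_right]
  simp only [add_sub_cancel_left, one_mul] at hmid htrap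
  linarith

theorem cweight_succ_le_S (hα : α ∈ Ioo 0 1) (hσ : 0 < σ) :
    cweight α σ m (i + 1) ≤ S α ((i + 1 : ℕ) + σ) := by
  rcases eq_or_ne (i + 1) m with rfl | hne
  · exact (cweight_self_lt_S hα (Nat.succ_ne_zero i) hσ).le
  · exact (cweight_of_ne (Nat.succ_ne_zero i) hne).le

theorem S_lt_cweight (hα : α ∈ Ioo 0 1) (hσ : σ = 1 - α / 2) (hi : i < m) :
    S α ((i + 1 : ℕ) + σ) < cweight α σ m i := by
  have hσ₀ : 0 < σ := by linarith [hα.2]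
  rcases Nat.eq_zero_or_pos i with rfl | hi₀
  · simpa only [zero_add, Nat.cast_one, add_comm (1 : ℝ) σ] using S_lt_cweight_zero hα hσ
  · have hi₁ : (1 : ℝ) ≤ i := by exact_mod_cast hi₀
    rw [cweight_of_ne hi₀.ne' hi.ne]
    refine strictAntiOn_S hα (show (1 : ℝ) < i + σ by linarith)
      (show (1 : ℝ) < (i + 1 : ℕ) + σ by push_cast; linarith) ?_
    push_cast
    linarith

end CWeight

open CWeight in
/-- strict monotonicity and positive lower bound of the weights:
0 < (1−α)/(2(m+σ)^α) < c_m^{(m)} < ⋯ < c_1^{(m)} < c_0^{(m)} with σ = 1 − α/2. -/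
theorem stmt_3 (α σ : ℝ) (hα : α ∈ Set.Ioo (0 : ℝ) 1) (hσ : σ = 1 - α / 2)
    (m : ℕ) (hm : 1 ≤ m) :
    0 < (1 - α) / (2 * ((m : ℝ) + σ) ^ α) ∧
    (1 - α) / (2 * ((m : ℝ) + σ) ^ α) < cweight α σ m m ∧
    ∀ i : ℕ, i < m → cweight α σ m (i + 1) < cweight α σ m i := by
  have hσ₀ : 0 < σ := by linarith [hα.2]
  have hm₁ : (1 : ℝ) ≤ m := by exact_mod_cast hm
  refine ⟨div_pos (by linarith [hα.2]) (by positivity),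
    div_rpow_lt_cweight_self hα (by omega) (by linarith), fun i hi => ?_⟩
  exact (cweight_succ_le_S hα hσ₀).trans_lt (S_lt_cweight hα hσ hi)
end

section
/- Let E be a real inner product space, let σ ∈ (1/2, 1), and let a, b ∈ E. Then (2σ+1)·‖a‖² − (2σ−1)·‖b‖² + (2σ²+σ−1)·‖a−b‖² ≥ (1/σ)·‖a‖². -/
/-! `σ 𝒜(a,b) - ‖a‖²` is the perfect square `(2σ - 1)‖(σ + 1) a - σ b‖²`, which is nonnegative
as soon as `σ ≥ 1/2`; dividing by `σ > 0` gives the bound. -/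

theorem mul_energy_eq_norm_sq_add {E : Type*} [NormedAddCommGroup E] [InnerProductSpace ℝ E]
    (σ : ℝ) (a b : E) :
    σ * ((2 * σ + 1) * ‖a‖ ^ 2 - (2 * σ - 1) * ‖b‖ ^ 2 + (2 * σ ^ 2 + σ - 1) * ‖a - b‖ ^ 2)
      = ‖a‖ ^ 2 + (2 * σ - 1) * ‖(σ + 1) • a - σ • b‖ ^ 2 := by
  rw [norm_sub_sq_real, norm_sub_sq_real, norm_smul, norm_smul, real_inner_smul_left,
    real_inner_smul_right, mul_pow, mul_pow, Real.norm_eq_abs, Real.norm_eq_abs, sq_abs, sq_abs]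
  ring

/-- coercivity of the discrete energy functional
𝒜(a,b) = (2σ+1)‖a‖² − (2σ−1)‖b‖² + (2σ²+σ−1)‖a−b‖² ≥ (1/σ)‖a‖². -/
theorem stmt_13 {E : Type*} [NormedAddCommGroup E] [InnerProductSpace ℝ E]
    (σ : ℝ) (hσ : σ ∈ Set.Ioo (1/2 : ℝ) 1) (a b : E) :
    (2 * σ + 1) * ‖a‖ ^ 2 - (2 * σ - 1) * ‖b‖ ^ 2
      + (2 * σ ^ 2 + σ - 1) * ‖a - b‖ ^ 2 ≥ (1 / σ) * ‖a‖ ^ 2 := by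
  have hσ_pos : 0 < σ := by linarith [hσ.1]
  have hsq_nonneg : 0 ≤ (2 * σ - 1) * ‖(σ + 1) • a - σ • b‖ ^ 2 :=
    mul_nonneg (by linarith [hσ.1]) (sq_nonneg _)
  rw [ge_iff_le, one_div_mul_eq_div, div_le_iff₀' hσ_pos, mul_energy_eq_norm_sq_add]
  linarith
end

section
/- Let E be a real inner product space, let σ ∈ (1/2, 1), and let w₋, w₀, w₊ ∈ E. Define 𝒜(a,b) := (2σ+1)·‖a‖² − (2σ−1)·‖b‖² + (2σ²+σ−1)·‖a−b‖² for a, b ∈ E. Then ⟨ σ·w₊ + (1−σ)·w₀ , (2σ+1)·w₊ − 4σ·w₀ + (2σ−1)·w₋ ⟩ ≥ (1/2)·( 𝒜(w₊, w₀) − 𝒜(w₀, w₋) ). -/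
open scoped RealInnerProductSpace

/-- energy telescoping inequality
⟨σw₊ + (1−σ)w₀, (2σ+1)w₊ − 4σw₀ + (2σ−1)w₋⟩ ≥ (1/2)(𝒜(w₊,w₀) − 𝒜(w₀,w₋)),
where 𝒜(a,b) = (2σ+1)‖a‖² − (2σ−1)‖b‖² + (2σ²+σ−1)‖a−b‖². Here `wp`, `w0`, `wm`
denote w₊, w₀, w₋ respectively. -/
theorem stmt_14 {E : Type*} [NormedAddCommGroup E] [InnerProductSpace ℝ E]
    (σ : ℝ) (hσ : σ ∈ Set.Ioo (1/2 : ℝ) 1) (wm w0 wp : E) :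
    ⟪σ • wp + (1 - σ) • w0,
        (2 * σ + 1) • wp - (4 * σ) • w0 + (2 * σ - 1) • wm⟫ ≥
      (1 / 2) *
        (((2 * σ + 1) * ‖wp‖ ^ 2 - (2 * σ - 1) * ‖w0‖ ^ 2
            + (2 * σ ^ 2 + σ - 1) * ‖wp - w0‖ ^ 2)
          - ((2 * σ + 1) * ‖w0‖ ^ 2 - (2 * σ - 1) * ‖wm‖ ^ 2
            + (2 * σ ^ 2 + σ - 1) * ‖w0 - wm‖ ^ 2)) := by
  obtain ⟨h1, h2⟩ := hσ
  have hv : (0:ℝ) ≤ ⟪wp - (2:ℝ) • w0 + wm, wp - (2:ℝ) • w0 + wm⟫ :=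
    real_inner_self_nonneg
  have key : (0:ℝ) ≤ σ * (2*σ - 1) / 2 *
      ⟪wp - (2:ℝ) • w0 + wm, wp - (2:ℝ) • w0 + wm⟫ := by
    apply mul_nonneg _ hv
    nlinarith
  rw [ge_iff_le, ← sub_nonneg]
  have expand : ⟪σ • wp + (1 - σ) • w0,
        (2 * σ + 1) • wp - (4 * σ) • w0 + (2 * σ - 1) • wm⟫ -
      (1 / 2) *
        (((2 * σ + 1) * ‖wp‖ ^ 2 - (2 * σ - 1) * ‖w0‖ ^ 2
            + (2 * σ ^ 2 + σ - 1) * ‖wp - w0‖ ^ 2)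
          - ((2 * σ + 1) * ‖w0‖ ^ 2 - (2 * σ - 1) * ‖wm‖ ^ 2
            + (2 * σ ^ 2 + σ - 1) * ‖w0 - wm‖ ^ 2)) =
      σ * (2*σ - 1) / 2 * ⟪wp - (2:ℝ) • w0 + wm, wp - (2:ℝ) • w0 + wm⟫ := by
    simp only [← real_inner_self_eq_norm_sq, inner_add_left, inner_add_right,
      inner_sub_left, inner_sub_right, real_inner_smul_left, real_inner_smul_right,
      real_inner_comm w0 wp, real_inner_comm wm wp, real_inner_comm wm w0]
    ring
  rw [expand]
  exact key
end

section
/- Let T > 0 and let α : [0,T] → (0,1) be Lipschitz continuous. Then there exists a constant C ∈ (0,∞), independent of τ and of ℓ, such that for every τ ∈ (0, T] and every twice continuously differentiable function ℓ : [0, τ] → ℝ, setting β := α(τ/2) and s₀ := 2^{1−β}·τ^{β}·Γ(2−β), one has | (1/Γ(1−β)) · ∫_{0}^{τ/2} ℓ'(s)·(τ/2 − s)^{−β} ds − (ℓ(τ) − ℓ(0))/s₀ | ≤ C · ( sup_{s∈[0,τ]} |ℓ''(s)| ) · τ^{2−β}. -/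
/-!
Put `D := (ℓ τ - ℓ 0) / τ`. Since `(1 / Γ(1-β)) ∫₀^{τ/2} (τ/2 - s)^{-β} ds = (τ/2)^{1-β} / Γ(2-β)`
and `2^{1-β} τ^β (τ/2)^{1-β} = τ`, the quotient `(ℓ τ - ℓ 0) / s₀` is the Caputo integral of the
constant `D`, so the error is the Caputo integral of `ℓ' - D`. By the mean value theorem `D` is a
value of `ℓ'`, hence `|ℓ' - D| ≤ M τ` on `[0, τ]`, and the error is at most
`M τ (τ/2)^{1-β} / Γ(2-β) ≤ M τ^{2-β} / min_{[1,2]} Γ`.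
-/

open intervalIntegral MeasureTheory Set
open scoped Interval

lemma Real.exists_pos_le_Gamma_of_mem_Icc_one_two :
    ∃ c > (0 : ℝ), ∀ x ∈ Icc (1 : ℝ) 2, c ≤ Real.Gamma x := by
  have hcont : ContinuousOn Real.Gamma (Icc (1 : ℝ) 2) :=
    Real.differentiableOn_Gamma_Ioi.continuousOn.mono fun x hx => lt_of_lt_of_le one_pos hx.1
  obtain ⟨x₀, hx₀, hmin⟩ := isCompact_Icc.exists_isMinOn ⟨1, by norm_num⟩ hcont
  exact ⟨Real.Gamma x₀, Real.Gamma_pos_of_pos (by linarith [hx₀.1]), fun x hx => hmin hx⟩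

lemma abs_deriv_sub_slope_le {f f' f'' : ℝ → ℝ} {a b M : ℝ} (hab : a < b)
    (hf : ∀ s ∈ Icc a b, HasDerivWithinAt f (f' s) (Icc a b) s)
    (hf' : ∀ s ∈ Icc a b, HasDerivWithinAt f' (f'' s) (Icc a b) s)
    (hM : ∀ s ∈ Icc a b, |f'' s| ≤ M) :
    ∀ s ∈ Icc a b, |f' s - (f b - f a) / (b - a)| ≤ M * (b - a) := by
  intro s hs
  obtain ⟨ξ, hξ, hslope⟩ := exists_hasDerivAt_eq_slope f f' hab
    (fun x hx => (hf x hx).continuousWithinAt)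
    (fun x hx => (hf x (Ioo_subset_Icc_self hx)).hasDerivAt (Icc_mem_nhds hx.1 hx.2))
  have hξ' : ξ ∈ Icc a b := Ioo_subset_Icc_self hξ
  have hlip : |f' s - f' ξ| ≤ M * |s - ξ| := by
    simpa only [Real.norm_eq_abs] using
      (convex_Icc a b).norm_image_sub_le_of_norm_hasDerivWithin_le hf'
        (fun x hx => by simpa only [Real.norm_eq_abs] using hM x hx) hξ' hs
  have hM0 : 0 ≤ M := (abs_nonneg _).trans (hM s hs)
  have hdist : |s - ξ| ≤ b - a :=
    abs_sub_le_iff.mpr ⟨by linarith [hs.2, hξ'.1], by linarith [hs.1, hξ'.2]⟩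
  rw [← hslope]
  exact hlip.trans (mul_le_mul_of_nonneg_left hdist hM0)

section CaputoKernel

variable {β : ℝ}

lemma intervalIntegrable_sub_rpow_neg (hβ : β < 1) (t : ℝ) :
    IntervalIntegrable (fun s => (t - s) ^ (-β)) volume 0 t := by
  simpa using
    ((intervalIntegrable_rpow' (a := 0) (b := t) (by linarith : -1 < -β)).comp_sub_left t).symm

lemma integral_sub_rpow_neg (hβ : β < 1) (t : ℝ) :
    ∫ s in (0 : ℝ)..t, (t - s) ^ (-β) = t ^ (1 - β) / (1 - β) := by
  rw [integral_comp_sub_left (fun s => s ^ (-β)) t, sub_self, sub_zero,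
    integral_rpow (Or.inl (by linarith)), Real.zero_rpow (by linarith)]
  ring_nf

lemma abs_integral_mul_sub_rpow_neg_le (hβ : β < 1) {f : ℝ → ℝ} {t K : ℝ} (ht : 0 < t)
    (hf : ∀ s ∈ Ioc 0 t, |f s| ≤ K) :
    |∫ s in (0 : ℝ)..t, f s * (t - s) ^ (-β)| ≤ K * (t ^ (1 - β) / (1 - β)) := by
  have hbound : ∀ᵐ s ∂volume.restrict (Ι 0 t), ‖f s * (t - s) ^ (-β)‖ ≤ K * (t - s) ^ (-β) := by
    refine (ae_restrict_mem measurableSet_uIoc).mono fun s hs => ?_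
    rw [uIoc_of_le ht.le] at hs
    have hw : 0 ≤ (t - s) ^ (-β) := Real.rpow_nonneg (by linarith [hs.2]) _
    rw [Real.norm_eq_abs, abs_mul, abs_of_nonneg hw]
    exact mul_le_mul_of_nonneg_right (hf s hs) hw
  have hK : 0 ≤ K := (abs_nonneg _).trans (hf t ⟨ht, le_rfl⟩)
  have h1β : 0 < 1 - β := by linarith
  have hbound_nonneg : 0 ≤ K * (t ^ (1 - β) / (1 - β)) := by positivity
  have h := norm_integral_le_abs_of_norm_le hbound
    ((intervalIntegrable_sub_rpow_neg hβ t).const_mul K)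
  rwa [intervalIntegral.integral_const_mul, integral_sub_rpow_neg hβ, Real.norm_eq_abs,
    abs_of_nonneg hbound_nonneg] at h

end CaputoKernel

lemma two_rpow_mul_rpow_mul_half_rpow {τ : ℝ} (hτ : 0 < τ) (β : ℝ) :
    (2 : ℝ) ^ (1 - β) * τ ^ β * (τ / 2) ^ (1 - β) = τ := by
  rw [mul_right_comm, ← Real.mul_rpow (by norm_num) (by positivity),
    mul_div_cancel₀ τ two_ne_zero, ← Real.rpow_add hτ, sub_add_cancel, Real.rpow_one]

lemma abs_caputo_half_sub_slope_le {β τ M : ℝ} (hβ : β < 1) (hτ : 0 < τ) {ℓ ℓ' ℓ'' : ℝ → ℝ}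
    (hℓ : ∀ s ∈ Icc 0 τ, HasDerivWithinAt ℓ (ℓ' s) (Icc 0 τ) s)
    (hℓ' : ∀ s ∈ Icc 0 τ, HasDerivWithinAt ℓ' (ℓ'' s) (Icc 0 τ) s)
    (hM : ∀ s ∈ Icc 0 τ, |ℓ'' s| ≤ M) :
    |(1 / Real.Gamma (1 - β)) * (∫ s in (0 : ℝ)..(τ / 2), ℓ' s * (τ / 2 - s) ^ (-β)) -
        (ℓ τ - ℓ 0) / ((2 : ℝ) ^ (1 - β) * τ ^ β * Real.Gamma (2 - β))| ≤
      M * τ * (τ / 2) ^ (1 - β) / Real.Gamma (2 - β) := by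
  set D := (ℓ τ - ℓ 0) / τ
  have h1β : 0 < 1 - β := by linarith
  have hΓ1 : 0 < Real.Gamma (1 - β) := Real.Gamma_pos_of_pos h1β
  have hΓ2 : Real.Gamma (2 - β) = (1 - β) * Real.Gamma (1 - β) := by
    rw [show (2 : ℝ) - β = 1 - β + 1 by ring, Real.Gamma_add_one h1β.ne']
  have hconst : (ℓ τ - ℓ 0) / ((2 : ℝ) ^ (1 - β) * τ ^ β * Real.Gamma (2 - β)) =
      (1 / Real.Gamma (1 - β)) * ∫ s in (0 : ℝ)..(τ / 2), D * (τ / 2 - s) ^ (-β) := by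
    have hscale := two_rpow_mul_rpow_mul_half_rpow hτ β
    have : (0 : ℝ) < (2 : ℝ) ^ (1 - β) * τ ^ β := by positivity
    rw [intervalIntegral.integral_const_mul, integral_sub_rpow_neg hβ, hΓ2]
    simp only [D]
    field_simp
    linear_combination -(ℓ τ - ℓ 0) * hscale
  have hsplit : (∫ s in (0 : ℝ)..(τ / 2), ℓ' s * (τ / 2 - s) ^ (-β)) -
      ∫ s in (0 : ℝ)..(τ / 2), D * (τ / 2 - s) ^ (-β) =
      ∫ s in (0 : ℝ)..(τ / 2), (ℓ' s - D) * (τ / 2 - s) ^ (-β) := by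
    have hw := intervalIntegrable_sub_rpow_neg hβ (τ / 2)
    have hℓ'cont : ContinuousOn ℓ' (uIcc 0 (τ / 2)) :=
      ContinuousOn.mono (fun s hs => (hℓ' s hs).continuousWithinAt) <| by
        rw [uIcc_of_le (by positivity)]
        exact Icc_subset_Icc le_rfl (by linarith)
    simp only [sub_mul]
    exact (integral_sub (hw.continuousOn_mul hℓ'cont) (hw.const_mul D)).symm
  have hbound : |∫ s in (0 : ℝ)..(τ / 2), (ℓ' s - D) * (τ / 2 - s) ^ (-β)| ≤
      M * τ * ((τ / 2) ^ (1 - β) / (1 - β)) :=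
    abs_integral_mul_sub_rpow_neg_le hβ (half_pos hτ) fun s hs => by
      simpa [D] using abs_deriv_sub_slope_le hτ hℓ hℓ' hM s ⟨hs.1.le, by linarith [hs.2]⟩
  rw [hconst, ← mul_sub, hsplit, abs_mul, abs_of_pos (one_div_pos.mpr hΓ1)]
  calc 1 / Real.Gamma (1 - β) * |∫ s in (0 : ℝ)..(τ / 2), (ℓ' s - D) * (τ / 2 - s) ^ (-β)|
      ≤ 1 / Real.Gamma (1 - β) * (M * τ * ((τ / 2) ^ (1 - β) / (1 - β))) := by gcongr
    _ = M * τ * (τ / 2) ^ (1 - β) / Real.Gamma (2 - β) := by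
      rw [hΓ2]; field_simp

theorem stmt_15_general (T : ℝ) (α : ℝ → ℝ)
    (hrange : ∀ t ∈ Set.Icc (0 : ℝ) T, α t ∈ Set.Ioo (0 : ℝ) 1) :
    ∃ C > (0 : ℝ), ∀ τ ∈ Set.Ioc (0 : ℝ) T, ∀ ℓ ℓ' ℓ'' : ℝ → ℝ,
      (∀ s ∈ Set.Icc (0 : ℝ) τ, HasDerivWithinAt ℓ (ℓ' s) (Set.Icc (0 : ℝ) τ) s) →
      (∀ s ∈ Set.Icc (0 : ℝ) τ, HasDerivWithinAt ℓ' (ℓ'' s) (Set.Icc (0 : ℝ) τ) s) →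
      ContinuousOn ℓ'' (Set.Icc (0 : ℝ) τ) →
      ∀ M : ℝ, (∀ s ∈ Set.Icc (0 : ℝ) τ, |ℓ'' s| ≤ M) →
        |(1 / Real.Gamma (1 - α (τ / 2))) *
            (∫ s in (0 : ℝ)..(τ / 2), ℓ' s * (τ / 2 - s) ^ (-(α (τ / 2)))) -
          (ℓ τ - ℓ 0) /
            ((2 : ℝ) ^ (1 - α (τ / 2)) * τ ^ (α (τ / 2)) *
              Real.Gamma (2 - α (τ / 2)))| ≤
          C * M * τ ^ (2 - α (τ / 2)) := by
  obtain ⟨c, hc, hcΓ⟩ := Real.exists_pos_le_Gamma_of_mem_Icc_one_two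
  refine ⟨1 / c, one_div_pos.mpr hc, ?_⟩
  rintro τ ⟨hτ, hτT⟩ ℓ ℓ' ℓ'' hℓ hℓ' - M hM
  set β := α (τ / 2)
  obtain ⟨hβ0, hβ1⟩ := hrange (τ / 2) ⟨by linarith, by linarith⟩
  have hM0 : 0 ≤ M := (abs_nonneg _).trans (hM 0 ⟨le_rfl, hτ.le⟩)
  have hτpow : τ * (τ / 2) ^ (1 - β) ≤ τ ^ (2 - β) := by
    rw [show 2 - β = 1 + (1 - β) by ring, Real.rpow_add hτ, Real.rpow_one]
    gcongr
    linarith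
  have hΓ2 : c ≤ Real.Gamma (2 - β) := hcΓ _ ⟨by linarith, by linarith⟩
  calc _ ≤ M * τ * (τ / 2) ^ (1 - β) / Real.Gamma (2 - β) :=
        abs_caputo_half_sub_slope_le hβ1 hτ hℓ hℓ' hM
    _ ≤ M * τ ^ (2 - β) / c := by
      rw [mul_assoc]
      gcongr
    _ = 1 / c * M * τ ^ (2 - β) := by ring

/-- first-step (m = 0) truncation error estimate for the time
discretization of the variable-order Caputo derivative at t = τ/2:
|ᶜD_t^{β} ℓ(τ/2) − (ℓ(τ) − ℓ(0))/s₀| ≤ C·(sup|ℓ''|)·τ^{2−β},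
where β = α(τ/2) and s₀ = 2^{1−β}·τ^{β}·Γ(2−β). -/
theorem stmt_15 (T L : ℝ) (α : ℝ → ℝ)
    (hT : 0 < T) (hL : 0 ≤ L)
    (hrange : ∀ t ∈ Set.Icc (0 : ℝ) T, α t ∈ Set.Ioo (0 : ℝ) 1)
    (hLip : ∀ s ∈ Set.Icc (0 : ℝ) T, ∀ t ∈ Set.Icc (0 : ℝ) T,
      |α s - α t| ≤ L * |s - t|) :
    ∃ C > (0 : ℝ), ∀ τ ∈ Set.Ioc (0 : ℝ) T, ∀ ℓ ℓ' ℓ'' : ℝ → ℝ,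
      (∀ s ∈ Set.Icc (0 : ℝ) τ, HasDerivWithinAt ℓ (ℓ' s) (Set.Icc (0 : ℝ) τ) s) →
      (∀ s ∈ Set.Icc (0 : ℝ) τ, HasDerivWithinAt ℓ' (ℓ'' s) (Set.Icc (0 : ℝ) τ) s) →
      ContinuousOn ℓ'' (Set.Icc (0 : ℝ) τ) →
      ∀ M : ℝ, (∀ s ∈ Set.Icc (0 : ℝ) τ, |ℓ'' s| ≤ M) →
        |(1 / Real.Gamma (1 - α (τ / 2))) *
            (∫ s in (0 : ℝ)..(τ / 2), ℓ' s * (τ / 2 - s) ^ (-(α (τ / 2)))) -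
          (ℓ τ - ℓ 0) /
            ((2 : ℝ) ^ (1 - α (τ / 2)) * τ ^ (α (τ / 2)) *
              Real.Gamma (2 - α (τ / 2)))| ≤
          C * M * τ ^ (2 - α (τ / 2)) :=
  stmt_15_general T α hrange
end
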